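/- For n = 2 and the wedge W = {λ ∈ (0,∞)² : λ₁ ≥ λ₂}: Ω(β|W) = |β₁| + |β₂| if |β₁| > |β₂|, and Ω(β|W) = √2 · sqrt(β₁² + β₂²) if |β₁| ≤ |β₂|, for every β ∈ (ℝ\{0})². -/

import Mathlib

/-!
Write `f(λ) = ½ ∑ (βᵢ²/λᵢ + λᵢ)`. By AM-GM `βᵢ²/λᵢ + λᵢ ≥ 2|βᵢ|`, with equality at `λᵢ = |βᵢ|`;
when `|β₁| > |β₂|` this unconstrained minimiser lies in the wedge. Otherwise the minimiser is on the
boundary `λ₁ = λ₂ = c` with `2c² = β₁² + β₂²`: bounding each `1/λᵢ` below by its tangent line at `c`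
makes `f` at least `2c` plus `(β₂² - β₁²)(λ₁ - λ₂)/(4c²)`, which is nonnegative on the wedge.
-/

open Real

lemma two_mul_abs_le_sq_div_add (x : ℝ) {l : ℝ} (hl : 0 < l) : 2 * |x| ≤ x ^ 2 / l + l := by
  have h : x ^ 2 / l * l = x ^ 2 := div_mul_cancel₀ _ hl.ne'
  nlinarith [sq_nonneg (|x| - l), sq_abs x]

lemma two_div_sub_div_sq_le_inv {c l : ℝ} (hc : c ≠ 0) (hl : 0 < l) : 2 / c - l / c ^ 2 ≤ l⁻¹ := by
  have key : 0 ≤ (l - c) ^ 2 / (l * c ^ 2) := by positivity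
  have expand : (l - c) ^ 2 / (l * c ^ 2) = l⁻¹ - (2 / c - l / c ^ 2) := by
    field_simp
    ring
  linarith

lemma sqrt_two_mul_sqrt_eq_two_mul_sqrt_half (s : ℝ) :
    √2 * √s = 2 * √(s / 2) := by
  rw [← sqrt_mul zero_le_two, show 2 * s = 2 ^ 2 * (s / 2) by ring,
    sqrt_mul (by positivity), sqrt_sq zero_le_two]

def wedgeValues (β : Fin 2 → ℝ) : Set ℝ :=
  {t | ∃ l : Fin 2 → ℝ, (∀ i, 0 < l i) ∧ l 1 ≤ l 0 ∧ t = (1/2) * ∑ i, (β i ^ 2 / l i + l i)}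

lemma isLeast_wedgeValues_of_abs_lt {β : Fin 2 → ℝ} (hβ : ∀ i, β i ≠ 0) (h : |β 1| < |β 0|) :
    IsLeast (wedgeValues β) (|β 0| + |β 1|) := by
  constructor
  · refine ⟨fun i => |β i|, fun i => abs_pos.2 (hβ i), h.le, ?_⟩
    have sq_div_abs (i : Fin 2) : β i ^ 2 / |β i| = |β i| := by
      rw [← sq_abs, sq, mul_div_cancel_right₀ _ (abs_ne_zero.2 (hβ i))]
    rw [Fin.sum_univ_two, sq_div_abs, sq_div_abs]
    ring
  · rintro t ⟨l, hl, -, rfl⟩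
    rw [Fin.sum_univ_two]
    linarith [two_mul_abs_le_sq_div_add (β 0) (hl 0), two_mul_abs_le_sq_div_add (β 1) (hl 1)]

lemma isLeast_wedgeValues_of_sq_le {β : Fin 2 → ℝ} {c : ℝ} (hc : 0 < c)
    (hc2 : 2 * c ^ 2 = β 0 ^ 2 + β 1 ^ 2) (h : β 0 ^ 2 ≤ β 1 ^ 2) :
    IsLeast (wedgeValues β) (2 * c) := by
  constructor
  · refine ⟨fun _ => c, fun _ => hc, le_rfl, ?_⟩
    rw [Fin.sum_univ_two]
    field_simp
    linear_combination hc2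
  · rintro t ⟨l, hl, hle, rfl⟩
    rw [Fin.sum_univ_two]
    have tangent (i : Fin 2) : β i ^ 2 * (2 / c - l i / c ^ 2) ≤ β i ^ 2 / l i :=
      mul_le_mul_of_nonneg_left (two_div_sub_div_sq_le_inv hc.ne' (hl i)) (sq_nonneg _)
    have sum_tangents : β 0 ^ 2 * (2 / c - l 0 / c ^ 2) + β 1 ^ 2 * (2 / c - l 1 / c ^ 2)
        + l 0 + l 1 = 4 * c + (β 1 ^ 2 - β 0 ^ 2) * (l 0 - l 1) / (2 * c ^ 2) := by
      field_simp
      linear_combination (l 0 + l 1 - 4 * c) * hc2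
    have gap : 0 ≤ (β 1 ^ 2 - β 0 ^ 2) * (l 0 - l 1) / (2 * c ^ 2) :=
      div_nonneg (mul_nonneg (sub_nonneg.2 h) (sub_nonneg.2 hle)) (by positivity)
    linarith [tangent 0, tangent 1]

theorem stmt_11 (β : Fin 2 → ℝ) (hβ : ∀ i, β i ≠ 0) :
    sInf {t : ℝ | ∃ l : Fin 2 → ℝ, (∀ i, 0 < l i) ∧ l 1 ≤ l 0 ∧
        t = (1/2) * ∑ i, (β i ^ 2 / l i + l i)} =
      if |β 1| < |β 0| then |β 0| + |β 1|
      else Real.sqrt 2 * Real.sqrt (β 0 ^ 2 + β 1 ^ 2) := by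
  change sInf (wedgeValues β) = _
  split_ifs with h
  · exact (isLeast_wedgeValues_of_abs_lt hβ h).csInf_eq
  · have hs : 0 < β 0 ^ 2 + β 1 ^ 2 := by have := hβ 1; positivity
    rw [sqrt_two_mul_sqrt_eq_two_mul_sqrt_half]
    refine (isLeast_wedgeValues_of_sq_le (sqrt_pos.2 (by positivity)) ?_ ?_).csInf_eq
    · rw [sq_sqrt (by positivity)]
      ring
    · exact sq_le_sq.2 (not_lt.1 h)
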